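/- arXiv:0706.4102 — 2 statements merged into one kernel-verified Lean document; each statement's English description precedes it below -/
import Mathlib

section
/- For all integers q ≥ p ≥ 2 there exists a constant c > 0 (depending only on p and q) such that every graph on n vertices that contains no copy of the complete bipartite graph K_{p,q} as a subgraph has an independent set of size at least c · n^{1/p}. -/
open SimpleGraph

/-- `G.ContainsCopy H` means the graph `G` contains a subgraph isomorphic to `H`,
i.e. there is an injective graph homomorphism from `H` into `G`. -/
def SimpleGraph.ContainsCopy {α β : Type*} (G : SimpleGraph α) (H : SimpleGraph β) : Prop :=
  ∃ f : H →g G, Function.Injective f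

/-- `RamseyProp n H G` : every graph `Γ` on `n` vertices contains a copy of `H`,
or its complement contains a copy of `G`. -/
def RamseyProp {α β : Type*} (n : ℕ) (H : SimpleGraph α) (G : SimpleGraph β) : Prop :=
  ∀ Γ : SimpleGraph (Fin n), Γ.ContainsCopy H ∨ Γᶜ.ContainsCopy G

/-- The Ramsey number `r(H, G)` : the least positive `n` such that every graph on `n`
vertices contains a copy of `H` or its complement contains a copy of `G`. -/
noncomputable def ramseyNumber {α β : Type*} (H : SimpleGraph α) (G : SimpleGraph β) : ℕ :=
  sInf {n : ℕ | 0 < n ∧ RamseyProp n H G}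

/-!
Let `α` be the independence number. By induction on `p`, a `K_{p,q}`-free graph on `n` vertices
satisfies `n ≤ (p + q) α^p`. Indeed, in a `K_{p+1,q}`-free graph the neighbourhood of every vertex
is `K_{p,q}`-free (a copy there extends by the vertex itself), so every degree is at most
`(p + q) α^p`; and a maximum independent set together with its neighbours covers all vertices,
so `n ≤ α (Δ + 1) ≤ (p + 1 + q) α^(p+1)`. Taking `p`-th roots, `α ≥ (p + q)^(-1/p) n^(1/p)`.
-/

open Finset

namespace SimpleGraph

variable {V W : Type*} (G : SimpleGraph V)

theorem containsCopy_iff_isContained {H : SimpleGraph W} : G.ContainsCopy H ↔ H ⊑ G :=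
  ⟨fun ⟨f, hf⟩ ↦ ⟨f.toCopy hf⟩, fun ⟨f⟩ ↦ ⟨f.toHom, f.injective⟩⟩

theorem card_le_indepNum_mul_succ [Fintype V] [DecidableRel G.Adj] {D : ℕ}
    (h : ∀ v, G.degree v ≤ D) : Fintype.card V ≤ G.indepNum * (D + 1) := by
  classical
  obtain ⟨S, hS⟩ := G.maximumIndepSet_exists
  have hcover : univ ⊆ S.biUnion fun s ↦ insert s (G.neighborFinset s) := by
    intro v _
    by_cases hv : v ∈ S
    · exact mem_biUnion.2 ⟨v, hv, mem_insert_self _ _⟩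
    by_contra hnot
    have hindep : G.IsIndepSet (insert v S : Finset V) := by
      rw [coe_insert]
      have hnadj : ∀ s ∈ S, ¬G.Adj s v := fun s hs hadj ↦
        hnot (mem_biUnion.2 ⟨s, hs, mem_insert_of_mem ((G.mem_neighborFinset _ _).2 hadj)⟩)
      exact hS.isIndepSet.insert fun s hs _ ↦ ⟨fun h ↦ hnadj s hs h.symm, hnadj s hs⟩
    have := hS.maximum _ hindep
    rw [card_insert_of_notMem hv] at this
    omega
  calc Fintype.card V = #(univ : Finset V) := card_univ.symm
    _ ≤ #(S.biUnion fun s ↦ insert s (G.neighborFinset s)) := card_le_card hcover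
    _ ≤ ∑ s ∈ S, #(insert s (G.neighborFinset s)) := card_biUnion_le
    _ ≤ ∑ _s ∈ S, (D + 1) := sum_le_sum fun s _ ↦ (card_insert_le _ _).trans (by simpa using h s)
    _ = G.indepNum * (D + 1) := by
      rw [sum_const, smul_eq_mul, G.maximumIndepSet_card_eq_indepNum S hS]

theorem indepNum_induce_le [Finite V] (s : Set V) : (G.induce s).indepNum ≤ G.indepNum := by
  obtain ⟨t, ht⟩ := (G.induce s).exists_isNIndepSet_indepNum
  rw [← ht.card_eq, ← card_map (Function.Embedding.subtype _)]
  refine IsIndepSet.card_le_indepNum ?_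
  rw [coe_map]
  rintro _ ⟨a, ha, rfl⟩ _ ⟨b, hb, rfl⟩ hab
  exact ht.isIndepSet ha hb (fun h ↦ hab (congrArg _ h))

theorem completeBipartiteGraph_fin_zero_isContained_iff [Fintype V] {q : ℕ} :
    completeBipartiteGraph (Fin 0) (Fin q) ⊑ G ↔ q ≤ Fintype.card V := by
  have hbot : completeBipartiteGraph (Fin 0) (Fin q) = ⊥ := by
    ext a b
    rcases a with a | a
    · exact a.elim0
    rcases b with b | b
    · exact b.elim0
    simp
  rw [hbot, bot_isContained_iff_card_le]
  simp

theorem completeBipartiteGraph_succ_isContained_of_induce_neighborSet {p q : ℕ} {v : V}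
    (h : completeBipartiteGraph (Fin p) (Fin q) ⊑ G.induce (G.neighborSet v)) :
    completeBipartiteGraph (Fin (p + 1)) (Fin q) ⊑ G := by
  classical
  obtain ⟨L, R, hL, hR, hLR⟩ := completeBipartiteGraph_isContained_iff.1 h
  rw [completeBipartiteGraph_isContained_iff]
  have hv : v ∉ L.map (Function.Embedding.subtype _) := by simp
  refine ⟨insert v (L.map (Function.Embedding.subtype _)), R.map (Function.Embedding.subtype _),
    by simp [card_insert_of_notMem hv, hL], by simp [hR], ?_⟩
  intro x hx y hy
  simp only [coe_insert, coe_map, Function.Embedding.coe_subtype, Set.mem_insert_iff,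
    Set.mem_image, mem_coe] at hx hy
  obtain ⟨b, hb, rfl⟩ := hy
  obtain rfl | ⟨a, ha, rfl⟩ := hx
  · exact b.2
  · exact hLR ha hb

theorem card_le_mul_indepNum_pow_of_free [Fintype V] (p q : ℕ)
    (h : (completeBipartiteGraph (Fin p) (Fin q)).Free G) :
    Fintype.card V ≤ (p + q) * G.indepNum ^ p := by
  classical
  induction p generalizing V with
  | zero =>
    rw [Free, completeBipartiteGraph_fin_zero_isContained_iff] at h
    simp only [zero_add, pow_zero, mul_one]
    omega
  | succ p ih =>
    have hdeg : ∀ v, G.degree v ≤ (p + q) * G.indepNum ^ p := fun v ↦ calc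
      G.degree v = Fintype.card (G.neighborSet v) := (G.card_neighborSet_eq_degree v).symm
      _ ≤ (p + q) * (G.induce (G.neighborSet v)).indepNum ^ p :=
        ih _ fun hc ↦ h (G.completeBipartiteGraph_succ_isContained_of_induce_neighborSet hc)
      _ ≤ (p + q) * G.indepNum ^ p := by gcongr; exact G.indepNum_induce_le _
    have hα : G.indepNum ≤ G.indepNum ^ (p + 1) := Nat.le_self_pow p.succ_ne_zero _
    calc Fintype.card V ≤ G.indepNum * ((p + q) * G.indepNum ^ p + 1) :=
          G.card_le_indepNum_mul_succ hdeg
      _ = (p + q) * G.indepNum ^ (p + 1) + G.indepNum := by ring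
      _ ≤ (p + 1 + q) * G.indepNum ^ (p + 1) := by nlinarith

end SimpleGraph

theorem Real.inv_rpow_inv_natCast_mul_le {n C a : ℝ} {p : ℕ} (hp : p ≠ 0) (hn : 0 ≤ n)
    (hC : 0 < C) (ha : 0 ≤ a) (h : n ≤ C * a ^ p) : (C ^ (p⁻¹ : ℝ))⁻¹ * n ^ (p⁻¹ : ℝ) ≤ a := by
  rw [inv_mul_le_iff₀ (by positivity)]
  calc n ^ (p⁻¹ : ℝ) ≤ (C * a ^ p) ^ (p⁻¹ : ℝ) := by gcongr
    _ = C ^ (p⁻¹ : ℝ) * a := by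
      rw [Real.mul_rpow hC.le (by positivity), Real.pow_rpow_inv_natCast ha hp]

theorem stmt_11_general (p q : ℕ) (hp : 2 ≤ p) :
    ∃ c : ℝ, 0 < c ∧ ∀ (n : ℕ) (Γ : SimpleGraph (Fin n)),
      ¬ Γ.ContainsCopy (completeBipartiteGraph (Fin p) (Fin q)) →
      ∃ S : Finset (Fin n), Γᶜ.IsClique (S : Set (Fin n)) ∧
        c * (n : ℝ) ^ ((1 : ℝ) / p) ≤ S.card := by
  have hC : (0 : ℝ) < (p + q : ℕ) := by positivity
  refine ⟨(((p + q : ℕ) : ℝ) ^ (p⁻¹ : ℝ))⁻¹, by positivity, fun n Γ hfree ↦ ?_⟩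
  obtain ⟨S, hS⟩ := Γ.maximumIndepSet_exists
  refine ⟨S, (isClique_compl _).2 hS.isIndepSet, ?_⟩
  have hn : n ≤ (p + q) * Γ.indepNum ^ p := by
    simpa using
      Γ.card_le_mul_indepNum_pow_of_free p q ((containsCopy_iff_isContained Γ).not.1 hfree)
  rw [Γ.maximumIndepSet_card_eq_indepNum S hS, one_div]
  exact Real.inv_rpow_inv_natCast_mul_le (by omega) n.cast_nonneg hC (Nat.cast_nonneg _)
    (by exact_mod_cast hn)

theorem stmt_11 (p q : ℕ) (hp : 2 ≤ p) (hpq : p ≤ q) :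
    ∃ c : ℝ, 0 < c ∧ ∀ (n : ℕ) (Γ : SimpleGraph (Fin n)),
      ¬ Γ.ContainsCopy (completeBipartiteGraph (Fin p) (Fin q)) →
      ∃ S : Finset (Fin n), Γᶜ.IsClique (S : Set (Fin n)) ∧
        c * (n : ℝ) ^ ((1 : ℝ) / p) ≤ S.card :=
  stmt_11_general p q hp
end

section
/- For every integer p ≥ 2 and every ε > 0 there exist an integer q ≥ p and a constant c > 0 such that for every graph G with m ≥ 2 edges, the Ramsey number satisfies r(K_{p,q}, G) ≥ c · m^{p/(p+1) − ε}. -/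
/-
Erdős' random-graph bound, with a biased random graph. On `n = ν^(pD)` vertices keep each pair
with probability `1/b`, `b = ν^(D+1)`; probabilities are realised by counting colourings of the
pairs with `b` colours, an edge being a pair of one fixed colour. The expected number of copies of
`K_{p,q}` is at most `n^(p+q) b^(-pq) < 1/2` for `q = D(p+2)`, and the expected number of copies of
`G` in the complement is at most `n^n (1 - 1/b)^m ≤ exp(1 + n log n - m/b) ≤ 1/2` as soon as
`m ≥ (pD+1) ν^(pD+D+2)`. Hence `r(K_{p,q}, G) > ν^(pD)` for the largest such `ν`, which is of order
`m^(pD/(pD+D+2))`, and `pD/(pD+D+2) ≥ p/(p+1) - ε` once `D ≥ 1/ε`.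
-/

open SimpleGraph

open Finset

namespace SimpleGraph

variable {α V : Type*}

theorem containsCopy_iff_isContained_s14 {H : SimpleGraph α} {Γ : SimpleGraph V} :
    Γ.ContainsCopy H ↔ H ⊑ Γ :=
  ⟨fun ⟨f, hf⟩ => ⟨f.toCopy hf⟩, fun ⟨f⟩ => ⟨f.toHom, f.injective⟩⟩

theorem exists_isNClique_or_isNClique_compl (Γ : SimpleGraph V) (s t : ℕ) (U : Finset V)
    (hU : 2 ^ (s + t) ≤ #U) : (∃ A ⊆ U, Γ.IsNClique s A) ∨ ∃ B ⊆ U, Γᶜ.IsNClique t B := by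
  classical
  induction h : s + t generalizing s t U with
  | zero => exact .inl ⟨∅, empty_subset _, by simp_all⟩
  | succ k ih =>
    rw [h] at hU
    rcases s with _ | s
    · exact .inl ⟨∅, empty_subset _, by simp⟩
    rcases t with _ | t
    · exact .inr ⟨∅, empty_subset _, by simp⟩
    obtain ⟨v, hv⟩ : U.Nonempty := card_pos.mp (lt_of_lt_of_le (Nat.two_pow_pos _) hU)
    set N := (U.erase v).filter (Γ.Adj v)
    set M := (U.erase v).filter (¬ Γ.Adj v ·)
    have hNM : #N + #M + 1 = #U := by
      rw [card_filter_add_card_filter_not, card_erase_add_one hv]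
    have hNU : N ⊆ U := (filter_subset _ _).trans (erase_subset _ _)
    have hMU : M ⊆ U := (filter_subset _ _).trans (erase_subset _ _)
    obtain ⟨hk₁, hk₂⟩ : s + (t + 1) = k ∧ s + 1 + t = k := by omega
    rw [pow_succ] at hU
    rcases le_or_gt (2 ^ k) #N with hN | hM
    · rcases ih s (t + 1) N (hk₁ ▸ hN) hk₁ with ⟨A, hAN, hA⟩ | ⟨B, hBN, hB⟩
      · refine .inl ⟨insert v A, insert_subset hv (hAN.trans hNU), ?_⟩
        exact hA.insert fun b hb => (mem_filter.mp (hAN hb)).2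
      · exact .inr ⟨B, hBN.trans hNU, hB⟩
    · rcases ih (s + 1) t M (hk₂ ▸ (by omega : 2 ^ k ≤ #M)) hk₂ with ⟨A, hAM, hA⟩ | ⟨B, hBM, hB⟩
      · exact .inl ⟨A, hAM.trans hMU, hA⟩
      · refine .inr ⟨insert v B, insert_subset hv (hBM.trans hMU), ?_⟩
        refine hB.insert fun b hb => ?_
        obtain ⟨hbU, hvb⟩ := mem_filter.mp (hBM hb)
        exact ⟨(ne_of_mem_erase hbU).symm, hvb⟩

theorem IsNClique.isContained [Fintype α] {Γ : SimpleGraph V} {s : ℕ} {A : Finset V}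
    (hA : Γ.IsNClique s A) (hα : Fintype.card α ≤ s) (H : SimpleGraph α) : H ⊑ Γ := by
  have hK : completeGraph (Fin s) ⊑ Γ :=
    (not_cliqueFree_iff_top_isContained s).mp hA.not_cliqueFree
  have hαs : completeGraph α ⊑ completeGraph (Fin s) :=
    isContained_top_iff.mpr (Function.Embedding.nonempty_of_card_le (by simpa using hα))
  exact (IsContained.of_le le_top).trans (hαs.trans hK)

theorem compl_fromEdgeSet_le (s : Set (Sym2 V)) : (fromEdgeSet s)ᶜ ≤ fromEdgeSet sᶜ := by
  intro v w
  simp only [compl_adj, fromEdgeSet_adj, Set.mem_compl_iff]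
  tauto

theorem mul_le_ncard_edgeSet_completeBipartiteGraph (α β : Type*) [Finite α] [Finite β] :
    Nat.card α * Nat.card β ≤ (completeBipartiteGraph α β).edgeSet.ncard := by
  rw [← Nat.card_prod,
    ← Set.ncard_range_of_injective (f := fun x : α × β => s((Sum.inl x.1 : α ⊕ β), Sum.inr x.2))]
  · refine Set.ncard_le_ncard ?_ (Set.toFinite _)
    rintro _ ⟨⟨a, b⟩, rfl⟩
    simp
  · rintro ⟨a, b⟩ ⟨a', b'⟩ h
    simpa using h

end SimpleGraph

section Ramsey

variable {α β : Type*} {H : SimpleGraph α} {G : SimpleGraph β}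

theorem ramseyProp_iff {n : ℕ} : RamseyProp n H G ↔ ∀ Γ : SimpleGraph (Fin n), H ⊑ Γ ∨ G ⊑ Γᶜ := by
  simp only [RamseyProp, containsCopy_iff_isContained_s14]

theorem RamseyProp.mono {k n : ℕ} (h : RamseyProp k H G) (hkn : k ≤ n) : RamseyProp n H G := by
  rw [ramseyProp_iff] at h ⊢
  intro Γ
  let e := Embedding.comap (Fin.castLEEmb hkn) Γ
  exact (h _).imp (·.trans e.isContained) (·.trans (Embedding.complEquiv e).isContained)

variable [Fintype α] [Fintype β]

theorem ramseyProp_two_pow_card_add_card :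
    RamseyProp (2 ^ (Fintype.card α + Fintype.card β)) H G := by
  rw [ramseyProp_iff]
  intro Γ
  refine (Γ.exists_isNClique_or_isNClique_compl
    (Fintype.card α) (Fintype.card β) univ (by simp)).imp ?_ ?_
  · rintro ⟨A, -, hA⟩
    exact hA.isContained le_rfl H
  · rintro ⟨B, -, hB⟩
    exact hB.isContained le_rfl G

theorem ramseyNumber_spec : 0 < ramseyNumber H G ∧ RamseyProp (ramseyNumber H G) H G :=
  Nat.sInf_mem (s := {n | 0 < n ∧ RamseyProp n H G})
    ⟨_, Nat.two_pow_pos _, ramseyProp_two_pow_card_add_card⟩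

theorem ramseyNumber_pos : 0 < ramseyNumber H G :=
  ramseyNumber_spec.1

theorem lt_ramseyNumber_of_not_ramseyProp {n : ℕ} (h : ¬ RamseyProp n H G) :
    n < ramseyNumber H G :=
  not_le.mp fun hle => h (ramseyNumber_spec.2.mono hle)

end Ramsey

theorem Fintype.card_filter_forall_mem_mul_pow {ι κ : Type*} [Fintype ι] [DecidableEq ι]
    [Fintype κ] [DecidableEq κ] (S : Finset ι) (T : Finset κ) :
    #{ω : ι → κ | ∀ e ∈ S, ω e ∈ T} * Fintype.card κ ^ #S =
      #T ^ #S * Fintype.card κ ^ Fintype.card ι := by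
  have hpi : ({ω : ι → κ | ∀ e ∈ S, ω e ∈ T} : Finset (ι → κ)) =
      Fintype.piFinset fun e => if e ∈ S then T else univ := by
    ext ω
    simp only [mem_filter, mem_univ, true_and, Fintype.mem_piFinset]
    exact ⟨fun h e => by split_ifs with he <;> simp [h e, *], fun h e he => by simpa [he] using h e⟩
  simp_rw [hpi, Fintype.card_piFinset, apply_ite Finset.card, card_univ]
  rw [prod_ite, prod_const, prod_const, filter_not, filter_mem_eq_inter, univ_inter,
    ← compl_eq_univ_sdiff, mul_assoc, ← pow_add, card_compl_add_card]

theorem Fintype.card_embedding_fin_le_pow (α : Type*) [Fintype α] (n : ℕ) :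
    Fintype.card (α ↪ Fin n) ≤ n ^ Fintype.card α := by
  simpa [Fintype.card_embedding_eq] using Nat.descFactorial_le_pow n _

theorem Fintype.card_embedding_fin_le_pow_self (α : Type*) [Fintype α] (n : ℕ) :
    Fintype.card (α ↪ Fin n) ≤ n ^ n := by
  rcases le_or_gt (Fintype.card α) n with h | h
  · rcases Nat.eq_zero_or_pos n with rfl | hn
    · simp_all
    exact (card_embedding_fin_le_pow α n).trans (Nat.pow_le_pow_right hn h)
  · simp [Fintype.card_embedding_eq, Nat.descFactorial_eq_zero_iff_lt.mpr h]

open Classical in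
theorem SimpleGraph.card_filter_isContained_fromEdgeSet_mul_pow_le {γ V κ : Type*} [Fintype γ]
    [Fintype V] [DecidableEq V] [Fintype κ] [DecidableEq κ] (H : SimpleGraph γ) (T : Finset κ) :
    #{ω : Sym2 V → κ | H ⊑ fromEdgeSet {e | ω e ∈ T}} * Fintype.card κ ^ H.edgeSet.ncard ≤
      Fintype.card (γ ↪ V) * (#T ^ H.edgeSet.ncard * Fintype.card κ ^ Fintype.card (Sym2 V)) := by
  let S : (γ ↪ V) → Finset (Sym2 V) := fun f => H.edgeFinset.map f.sym2Map
  have hsub : ({ω : Sym2 V → κ | H ⊑ fromEdgeSet {e | ω e ∈ T}} : Finset _) ⊆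
      univ.biUnion fun f => {ω | ∀ e ∈ S f, ω e ∈ T} := by
    intro ω hω
    obtain ⟨c⟩ := (mem_filter.mp hω).2
    refine mem_biUnion.mpr ⟨c.toEmbedding, mem_univ _, mem_filter.mpr ⟨mem_univ _, ?_⟩⟩
    simp only [S, mem_map, mem_edgeFinset, Function.Embedding.sym2Map_apply]
    rintro _ ⟨e, he, rfl⟩
    have := c.toHom.map_mem_edgeSet he
    rw [edgeSet_fromEdgeSet] at this
    exact this.1
  have hS : ∀ f, #(S f) = H.edgeSet.ncard := fun f => by
    rw [card_map, ← coe_edgeFinset, Set.ncard_coe_finset]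
  calc #{ω : Sym2 V → κ | H ⊑ fromEdgeSet {e | ω e ∈ T}} * Fintype.card κ ^ H.edgeSet.ncard
      ≤ (∑ f, #{ω : Sym2 V → κ | ∀ e ∈ S f, ω e ∈ T}) * Fintype.card κ ^ H.edgeSet.ncard :=
        Nat.mul_le_mul_right _ ((card_le_card hsub).trans card_biUnion_le)
    _ = ∑ f, #{ω : Sym2 V → κ | ∀ e ∈ S f, ω e ∈ T} * Fintype.card κ ^ #(S f) := by
        simp only [sum_mul, hS]
    _ = ∑ f : γ ↪ V, #T ^ #(S f) * Fintype.card κ ^ Fintype.card (Sym2 V) :=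
        sum_congr rfl fun f _ => Fintype.card_filter_forall_mem_mul_pow _ _
    _ = _ := by simp only [hS, sum_const, card_univ, smul_eq_mul]

/-- A colouring `ω` of the pairs of `Fin n` by `κ` gives the graph of the pairs of one colour `a`.
Under `hH` fewer than half of all colourings give a copy of `H`, and under `hG` at most half give
a copy of `G` in the complement. -/
theorem not_ramseyProp_of_card_embedding_lt {γ β κ : Type*} [Fintype γ] [Fintype β] [Fintype κ]
    [DecidableEq κ] [Nonempty κ] {n : ℕ} (H : SimpleGraph γ) (G : SimpleGraph β)
    (hH : 2 * Fintype.card (γ ↪ Fin n) < Fintype.card κ ^ H.edgeSet.ncard)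
    (hG : 2 * Fintype.card (β ↪ Fin n) * (Fintype.card κ - 1) ^ G.edgeSet.ncard ≤
      Fintype.card κ ^ G.edgeSet.ncard) :
    ¬ RamseyProp n H G := by
  classical
  obtain ⟨a⟩ := ‹Nonempty κ›
  set b := Fintype.card κ
  set N := Fintype.card (Sym2 (Fin n))
  set badH : Finset (Sym2 (Fin n) → κ) := {ω | H ⊑ fromEdgeSet {e | ω e ∈ ({a} : Finset κ)}}
  set badG : Finset (Sym2 (Fin n) → κ) := {ω | G ⊑ fromEdgeSet {e | ω e ∈ ({a} : Finset κ)ᶜ}}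
  have hb : 0 < b := Fintype.card_pos
  have hcardH := H.card_filter_isContained_fromEdgeSet_mul_pow_le (V := Fin n) {a}
  have hcardG := G.card_filter_isContained_fromEdgeSet_mul_pow_le (V := Fin n) {a}ᶜ
  rw [card_singleton, one_pow, one_mul] at hcardH
  rw [card_compl, card_singleton] at hcardG
  have hbadH : 2 * #badH < b ^ N := by
    refine Nat.lt_of_mul_lt_mul_right (a := b ^ H.edgeSet.ncard) ?_
    calc 2 * #badH * b ^ H.edgeSet.ncard ≤ 2 * Fintype.card (γ ↪ Fin n) * b ^ N := by
          rw [mul_assoc, mul_assoc]; exact Nat.mul_le_mul_left 2 hcardH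
      _ < b ^ H.edgeSet.ncard * b ^ N := Nat.mul_lt_mul_of_pos_right hH (by positivity)
      _ = _ := mul_comm _ _
  have hbadG : 2 * #badG ≤ b ^ N := by
    refine Nat.le_of_mul_le_mul_right (c := b ^ G.edgeSet.ncard) ?_ (by positivity)
    calc 2 * #badG * b ^ G.edgeSet.ncard
        ≤ 2 * Fintype.card (β ↪ Fin n) * (b - 1) ^ G.edgeSet.ncard * b ^ N := by
          rw [mul_assoc, mul_assoc, mul_assoc]; exact Nat.mul_le_mul_left 2 hcardG
      _ ≤ b ^ G.edgeSet.ncard * b ^ N := Nat.mul_le_mul_right _ hG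
      _ = _ := mul_comm _ _
  have hcard : #(badH ∪ badG) < #(univ : Finset (Sym2 (Fin n) → κ)) := by
    rw [card_univ, Fintype.card_fun]
    exact (card_union_le _ _).trans_lt (show #badH + #badG < b ^ N by omega)
  obtain ⟨ω, -, hω⟩ := exists_mem_notMem_of_card_lt_card hcard
  rw [ramseyProp_iff]
  intro h
  rcases h (fromEdgeSet {e | ω e ∈ ({a} : Finset κ)}) with hHω | hGω
  · exact hω (mem_union_left _ (mem_filter.mpr ⟨mem_univ _, hHω⟩))
  · exact hω (mem_union_right _ (mem_filter.mpr ⟨mem_univ _, hGω.mono_right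
      ((compl_fromEdgeSet_le _).trans (fromEdgeSet_mono fun e he => by simpa using he))⟩))

open Real in
theorem two_mul_pow_mul_sub_one_pow_le {ν a b m : ℕ} (hν : 1 ≤ ν) (hb : 1 ≤ b)
    (h : b * (1 + a * (ν - 1)) ≤ m) : 2 * ν ^ a * (b - 1) ^ m ≤ b ^ m := by
  have hb0 : (0 : ℝ) < b := by exact_mod_cast hb
  have hexp : 1 + a * ((ν : ℝ) - 1) ≤ m / b := by
    have hcast : ((b * (1 + a * (ν - 1)) : ℕ) : ℝ) ≤ m := by exact_mod_cast h
    push_cast [Nat.cast_sub hν] at hcast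
    rw [le_div_iff₀ hb0]
    linarith
  have h2 : (2 : ℝ) ≤ exp 1 := by linarith [add_one_le_exp 1]
  have hνa : (ν : ℝ) ^ a ≤ exp (a * ((ν : ℝ) - 1)) := by
    rw [exp_nat_mul]
    exact pow_le_pow_left₀ (Nat.cast_nonneg _) (by linarith [add_one_le_exp ((ν : ℝ) - 1)]) a
  have hbm : ((b : ℝ) - 1) ^ m ≤ b ^ m * exp (-(m / b)) := by
    have h1 : (b : ℝ) - 1 = b * (1 - 1 / b) := by field_simp
    have h3 : exp (-(1 / b)) ^ m = exp (-(m / b)) := by rw [← exp_nat_mul]; ring_nf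
    have h4 : (0 : ℝ) ≤ 1 - 1 / b := by
      rw [sub_nonneg, div_le_one hb0]; exact_mod_cast hb
    rw [h1, mul_pow, ← h3]
    gcongr
    linarith [add_one_le_exp (-(1 / (b : ℝ)))]
  rw [← Nat.cast_le (α := ℝ)]
  push_cast [Nat.cast_sub hb]
  calc 2 * (ν : ℝ) ^ a * ((b : ℝ) - 1) ^ m
      ≤ exp 1 * exp (a * ((ν : ℝ) - 1)) * (b ^ m * exp (-(m / b))) := by
        have : (0 : ℝ) ≤ b - 1 := by linarith [(Nat.one_le_cast (α := ℝ)).mpr hb]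
        gcongr
    _ = b ^ m * exp (1 + a * ((ν : ℝ) - 1) - m / b) := by
        rw [exp_sub, exp_add, exp_neg]; ring
    _ ≤ b ^ m := mul_le_of_le_one_right (by positivity) (exp_le_one_iff.mpr (by linarith))

theorem two_mul_pow_lt_pow {ν x y : ℕ} (hν : 2 ≤ ν) (hxy : x + 2 ≤ y) : 2 * ν ^ x < ν ^ y :=
  calc 2 * ν ^ x ≤ ν ^ (x + 1) := by rw [pow_succ']; exact Nat.mul_le_mul_right _ hν
    _ < ν ^ (x + 2) := Nat.pow_lt_pow_right hν (by omega)
    _ ≤ ν ^ y := Nat.pow_le_pow_right (by omega) hxy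

theorem pow_succ_mul_one_add_mul_pow_mul_sub_one_le {ν k D : ℕ} (hν : 1 ≤ ν) :
    ν ^ (D + 1) * (1 + k * ν ^ k * (ν - 1)) ≤ (k + 1) * ν ^ (k + D + 2) := by
  have h1 : 1 ≤ ν ^ (k + 1) := Nat.one_le_pow _ _ hν
  have h2 : ν ^ k * (ν - 1) ≤ ν ^ (k + 1) := by
    rw [pow_succ]; exact Nat.mul_le_mul_left _ (Nat.sub_le _ _)
  calc ν ^ (D + 1) * (1 + k * ν ^ k * (ν - 1)) ≤ ν ^ (D + 1) * ((k + 1) * ν ^ (k + 1)) := by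
        rw [mul_assoc k]
        gcongr
        linarith [Nat.mul_le_mul_left k h2]
    _ = (k + 1) * ν ^ (k + D + 2) := by ring

theorem rpow_div_le_of_forall_pow_lt {k K m r : ℕ} (hK : 0 < K) (hkK : k ≤ K) (hr : 1 ≤ r)
    (h : ∀ ν, 2 ≤ ν → (k + 1) * ν ^ K ≤ m → ν ^ k < r) :
    (m : ℝ) ^ ((k : ℝ) / K) ≤ 2 ^ K * (k + 1) * r := by
  set z : ℝ := m / (k + 1)
  set y : ℝ := z ^ ((K : ℝ)⁻¹)
  have hz : 0 ≤ z := by positivity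
  have hy0 : 0 ≤ y := by positivity
  have hyK : y ^ K = z := Real.rpow_inv_natCast_pow hz hK.ne'
  have hθ : (k : ℝ) / K ≤ 1 := div_le_one_of_le₀ (by exact_mod_cast hkK) (by positivity)
  have hm : (m : ℝ) ^ ((k : ℝ) / K) ≤ (k + 1) * y ^ k := by
    have hzy : z ^ ((k : ℝ) / K) = y ^ k := by
      rw [← Real.rpow_natCast, ← Real.rpow_mul hz, inv_mul_eq_div]
    calc (m : ℝ) ^ ((k : ℝ) / K) = ((k + 1) * z) ^ ((k : ℝ) / K) := by
          congr 1; simp only [z]; field_simp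
      _ = ((k : ℝ) + 1) ^ ((k : ℝ) / K) * y ^ k := by
          rw [Real.mul_rpow (by positivity) hz, hzy]
      _ ≤ (k + 1) * y ^ k := by
          gcongr
          exact Real.rpow_le_self_of_one_le (by linarith [k.cast_nonneg (α := ℝ)]) hθ
  have hy : y ^ k ≤ 2 ^ K * r := by
    have h2kK : (2 : ℝ) ^ k ≤ 2 ^ K := pow_le_pow_right₀ one_le_two hkK
    rcases lt_or_ge y 2 with hy2 | hy2
    · calc y ^ k ≤ 2 ^ k := pow_le_pow_left₀ hy0 hy2.le k
        _ ≤ 2 ^ K * 1 := by rw [mul_one]; exact h2kK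
        _ ≤ 2 ^ K * r := by gcongr; exact_mod_cast hr
    · set ν := ⌊y⌋₊
      have hν2 : 2 ≤ ν := Nat.le_floor (by exact_mod_cast hy2)
      have hνy : (ν : ℝ) ≤ y := Nat.floor_le hy0
      have hνm : (k + 1) * ν ^ K ≤ m := by
        have : (ν : ℝ) ^ K ≤ z := hyK ▸ pow_le_pow_left₀ (by positivity) hνy K
        rw [le_div_iff₀ (by positivity)] at this
        exact_mod_cast (by linarith : ((k + 1) * ν ^ K : ℝ) ≤ m)
      have hνr : ((ν ^ k : ℕ) : ℝ) ≤ r := by exact_mod_cast (h ν hν2 hνm).le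
      have hy2ν : y ≤ 2 * ν := by
        have := Nat.lt_floor_add_one y
        have : (1 : ℝ) ≤ ν := by exact_mod_cast (by omega : 1 ≤ ν)
        linarith
      calc y ^ k ≤ (2 * ν) ^ k := pow_le_pow_left₀ hy0 hy2ν k
        _ = 2 ^ k * ((ν ^ k : ℕ) : ℝ) := by push_cast; ring
        _ ≤ 2 ^ K * r := by gcongr
  calc (m : ℝ) ^ ((k : ℝ) / K) ≤ (k + 1) * y ^ k := hm
    _ ≤ (k + 1) * (2 ^ K * r) := by gcongr
    _ = 2 ^ K * (k + 1) * r := by ring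

theorem div_add_one_sub_le_div {p D : ℕ} {ε : ℝ} (hD : 1 ≤ ε * D) :
    (p : ℝ) / (p + 1) - ε ≤ ((p * D : ℕ) : ℝ) / ((p * D + D + 2 : ℕ) : ℝ) := by
  have hP : (0 : ℝ) ≤ p := p.cast_nonneg
  have hD0 : (0 : ℝ) ≤ D := D.cast_nonneg
  have hgap : (p : ℝ) / (p + 1) - p * D / (p * D + D + 2) =
      2 * p / ((p + 1) * (p * D + D + 2)) := by
    field_simp
    ring
  have hε : 2 * (p : ℝ) ≤ ε * ((p + 1) * (p * D + D + 2)) := by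
    nlinarith [mul_nonneg (mul_nonneg hP hP) (sub_nonneg.mpr hD), mul_nonneg hP (sub_nonneg.mpr hD)]
  push_cast
  rw [sub_le_comm, hgap, div_le_iff₀ (by positivity)]
  exact hε

theorem pow_lt_ramseyNumber_completeBipartiteGraph {p D ν : ℕ} (hp : 1 ≤ p) (hD : 1 ≤ D)
    (hν : 2 ≤ ν) {β : Type*} [Fintype β] (G : SimpleGraph β)
    (hG : (p * D + 1) * ν ^ (p * D + D + 2) ≤ G.edgeSet.ncard) :
    ν ^ (p * D) < ramseyNumber (completeBipartiteGraph (Fin p) (Fin (D * (p + 2)))) G := by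
  set q := D * (p + 2)
  set n := ν ^ (p * D)
  set b := ν ^ (D + 1)
  have hb : 1 ≤ b := Nat.one_le_pow _ _ (by omega)
  have : NeZero b := ⟨by omega⟩
  refine lt_ramseyNumber_of_not_ramseyProp
    (not_ramseyProp_of_card_embedding_lt (κ := Fin b) (n := n) _ G ?_ ?_)
  · have hexp : p * D * (p + q) + 2 ≤ (D + 1) * (p * q) := by
      have : (D + 1) * (p * q) = p * D * (p + q) + 2 * (p * D) := by simp only [q]; ring
      nlinarith
    calc 2 * Fintype.card (Fin p ⊕ Fin q ↪ Fin n) ≤ 2 * n ^ (p + q) := by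
          simpa using Nat.mul_le_mul_left 2 (Fintype.card_embedding_fin_le_pow (Fin p ⊕ Fin q) n)
      _ < b ^ (p * q) := by
          simp only [n, b, ← pow_mul]
          exact two_mul_pow_lt_pow hν hexp
      _ ≤ _ := by
          simpa using Nat.pow_le_pow_right hb
            (mul_le_ncard_edgeSet_completeBipartiteGraph (Fin p) (Fin q))
  · set m := G.edgeSet.ncard
    have hbm : b * (1 + p * D * n * (ν - 1)) ≤ m :=
      (pow_succ_mul_one_add_mul_pow_mul_sub_one_le (by omega)).trans hG
    calc 2 * Fintype.card (β ↪ Fin n) * (Fintype.card (Fin b) - 1) ^ m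
        ≤ 2 * ν ^ (p * D * n) * (b - 1) ^ m := by
          rw [Fintype.card_fin, pow_mul]
          gcongr
          exact Fintype.card_embedding_fin_le_pow_self β n
      _ ≤ b ^ m := two_mul_pow_mul_sub_one_pow_le (by omega) hb hbm
      _ = _ := by rw [Fintype.card_fin]

theorem stmt_14 (p : ℕ) (hp : 2 ≤ p) (ε : ℝ) (hε : 0 < ε) :
    ∃ q : ℕ, p ≤ q ∧ ∃ c : ℝ, 0 < c ∧
      ∀ (β : Type) [Fintype β] (G : SimpleGraph β) (m : ℕ),
        G.edgeSet.ncard = m → 2 ≤ m →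
        c * (m : ℝ) ^ ((p : ℝ) / (p + 1) - ε) ≤
          ramseyNumber (completeBipartiteGraph (Fin p) (Fin q)) G := by
  set D := ⌈ε⁻¹⌉₊
  have hD : 1 ≤ D := Nat.ceil_pos.mpr (inv_pos.mpr hε)
  have hεD : 1 ≤ ε * D :=
    calc 1 = ε * ε⁻¹ := (mul_inv_cancel₀ hε.ne').symm
      _ ≤ ε * D := by gcongr; exact Nat.le_ceil _
  set K := p * D + D + 2
  refine ⟨D * (p + 2), by nlinarith, 1 / (2 ^ K * (p * D + 1)), by positivity, ?_⟩
  intro β _ G m hm hm2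
  set r := ramseyNumber (completeBipartiteGraph (Fin p) (Fin (D * (p + 2)))) G
  have hbound : (m : ℝ) ^ (((p * D : ℕ) : ℝ) / K) ≤ 2 ^ K * ((p * D : ℕ) + 1) * r :=
    rpow_div_le_of_forall_pow_lt (by omega) (by omega) ramseyNumber_pos
      fun ν hν hνm => pow_lt_ramseyNumber_completeBipartiteGraph (by omega) hD hν G (hm ▸ hνm)
  have hmono : (m : ℝ) ^ ((p : ℝ) / (p + 1) - ε) ≤ (m : ℝ) ^ (((p * D : ℕ) : ℝ) / K) :=
    Real.rpow_le_rpow_of_exponent_le (by exact_mod_cast (by omega : 1 ≤ m))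
      (by exact_mod_cast div_add_one_sub_le_div hεD)
  rw [one_div_mul_eq_div, div_le_iff₀ (by positivity)]
  push_cast at hbound hmono
  linarith
end
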